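/- For α ≠ 0 with fixed square root α^{1/2}, and any complex z, ξ, the k-th derivative of the entire function f(z) = exp(αz² + ξz) satisfies f^{(k)}(z) = (−i)^k · α^{k/2} · H_k( i·α^{1/2}·z + i·ξ/(2α^{1/2}) ) · exp(αz² + ξz), where H_k is the physicists' Hermite polynomial. -/

import Mathlib

open Complex

noncomputable def Hc : ℕ → ℂ → ℂ
  | 0, _ => 1
  | 1, x => 2 * x
  | (n + 2), x => 2 * x * Hc (n + 1) x - 2 * (n + 1) * Hc n x

/-!
Writing `w z = I s z + I ξ / (2 s)` and `E z = exp (α z² + ξ z)`, one has `w' = I s` and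
`E' = (2 s² z + ξ) E = -2 (I s) w E`. Together with `H_k' = 2 k H_{k-1}` and the three-term
recurrence this gives `(H_k ∘ w · E)' = -(I s) · (H_{k+1} ∘ w) · E`, and the formula follows by
induction on `k`.
-/

lemma Hc_succ (k : ℕ) (x : ℂ) :
    Hc (k + 1) x = 2 * x * Hc k x - 2 * k * Hc (k - 1) x := by
  cases k <;> simp [Hc]

lemma hasDerivAt_Hc : ∀ (k : ℕ) (x : ℂ), HasDerivAt (Hc k) (2 * k * Hc (k - 1) x) x
  | 0, x => by simpa [Hc] using hasDerivAt_const x (1 : ℂ)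
  | 1, x => by simpa [Hc] using (hasDerivAt_id x).const_mul (2 : ℂ)
  | (n + 2), x => by
      have hrec : Hc (n + 2) = fun y => 2 * y * Hc (n + 1) y - 2 * (n + 1) * Hc n y := by
        funext y; simp [Hc]
      have hlin : HasDerivAt (fun y : ℂ => 2 * y) 2 x := by
        simpa using (hasDerivAt_id x).const_mul (2 : ℂ)
      rw [hrec]
      refine ((hlin.mul (hasDerivAt_Hc (n + 1) x)).sub
        ((hasDerivAt_Hc n x).const_mul (2 * ((n : ℂ) + 1)))).congr_deriv ?_
      rw [show n + 2 - 1 = n + 1 from rfl, Hc_succ n x, Nat.add_sub_cancel]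
      push_cast
      ring

lemma hasDerivAt_Hc_comp_mul {w E : ℂ → ℂ} {c z : ℂ} (k : ℕ) (hw : HasDerivAt w c z)
    (hE : HasDerivAt E (-2 * c * w z * E z) z) :
    HasDerivAt (fun u => Hc k (w u) * E u) (-c * Hc (k + 1) (w z) * E z) z := by
  refine (((hasDerivAt_Hc k (w z)).comp z hw).mul hE).congr_deriv ?_
  rw [Function.comp_apply, Hc_succ]
  ring

lemma iteratedDeriv_eq_Hc_comp_mul {w E : ℂ → ℂ} {c : ℂ} (hw : ∀ z, HasDerivAt w c z)
    (hE : ∀ z, HasDerivAt E (-2 * c * w z * E z) z) (k : ℕ) :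
    iteratedDeriv k E = fun z => (-c) ^ k * Hc k (w z) * E z := by
  induction k with
  | zero => funext z; simp [Hc]
  | succ k ih =>
    funext z
    rw [iteratedDeriv_succ, ih]
    simp_rw [mul_assoc]
    rw [((hasDerivAt_Hc_comp_mul k (hw z) (hE z)).const_mul ((-c) ^ k)).deriv]
    ring

theorem stmt18 (α ξ s : ℂ) (hα : α ≠ 0) (hs : s ^ 2 = α) (k : ℕ) (z : ℂ) :
    iteratedDeriv k (fun u : ℂ => Complex.exp (α * u ^ 2 + ξ * u)) z =
      (-Complex.I) ^ k * s ^ k *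
        Hc k (Complex.I * s * z + Complex.I * ξ / (2 * s)) *
        Complex.exp (α * z ^ 2 + ξ * z) := by
  have hs0 : s ≠ 0 := by
    rintro rfl
    exact hα (by rw [← hs]; ring)
  have hw (u : ℂ) : HasDerivAt (fun u => I * s * u + I * ξ / (2 * s)) (I * s) u := by
    simpa using ((hasDerivAt_id u).const_mul (I * s)).add_const (I * ξ / (2 * s))
  have hslope (u : ℂ) : 2 * s ^ 2 * u + ξ = -2 * (I * s) * (I * s * u + I * ξ / (2 * s)) := by
    field_simp
    linear_combination (2 * s ^ 2 * u + ξ) * I_sq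
  have hE (u : ℂ) : HasDerivAt (fun u => exp (α * u ^ 2 + ξ * u))
      (-2 * (I * s) * (I * s * u + I * ξ / (2 * s)) * exp (α * u ^ 2 + ξ * u)) u := by
    refine (((hasDerivAt_pow 2 u).const_mul α).add
      ((hasDerivAt_id u).const_mul ξ)).cexp.congr_deriv ?_
    simp only [← hs, ← hslope, Nat.cast_ofNat, Nat.add_one_sub_one, pow_one, mul_one, id,
      Pi.add_apply]
    ring
  rw [iteratedDeriv_eq_Hc_comp_mul hw hE, ← neg_mul, mul_pow]
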